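/- arXiv:2109.05652 — 2 statements merged into one kernel-verified Lean document; each statement's English description precedes it below -/
import Mathlib

section
/- For the convex function h(x) = x log x - (x+1) log(x+1) (extended appropriately for x ≥ 0), its convex conjugate is h*(y) = sup_x { x·y - h(x) } = -log(1 - e^y) for y < 0. -/
open Real

/-!
Write `t = e^y ∈ (0, 1)`. The bound `x log t - h x ≤ -log (1 - t)` is the sum of `log u ≤ u - 1`
at `u = t (x + 1) / x`, weighted by `x`, and at `u = (1 - t) (x + 1)`: the right-hand sides cancel.
Equality holds at `x = t / (1 - t)`, so the supremum is attained there.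
-/

noncomputable def negBoseEntropy (x : ℝ) : ℝ := x * log x - (x + 1) * log (x + 1)

lemma mul_log_sub_negBoseEntropy_le {t x : ℝ} (ht0 : 0 < t) (ht1 : t < 1) (hx : 0 ≤ x) :
    x * log t - negBoseEntropy x ≤ -log (1 - t) := by
  unfold negBoseEntropy
  obtain rfl | hx := hx.eq_or_lt
  · simpa using log_nonpos (by linarith) (by linarith)
  have hlog_t : log (t * (x + 1) / x) ≤ t * (x + 1) / x - 1 := log_le_sub_one_of_pos (by positivity)
  have hlog_one_sub : log ((1 - t) * (x + 1)) ≤ (1 - t) * (x + 1) - 1 :=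
    log_le_sub_one_of_pos (mul_pos (by linarith) (by linarith))
  rw [log_div (by positivity) hx.ne', log_mul ht0.ne' (by linarith)] at hlog_t
  rw [log_mul (by linarith) (by linarith)] at hlog_one_sub
  have hx_mul : x * (log t + log (x + 1) - log x) ≤ t * (x + 1) - x := by
    have := mul_le_mul_of_nonneg_left hlog_t hx.le
    rwa [mul_sub_one, mul_div_cancel₀ _ hx.ne'] at this
  linarith

lemma mul_log_sub_negBoseEntropy_div_one_sub {t : ℝ} (ht0 : 0 < t) (ht1 : t < 1) :
    t / (1 - t) * log t - negBoseEntropy (t / (1 - t)) = -log (1 - t) := by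
  have h1t : 1 - t ≠ 0 := by linarith
  have hsucc : t / (1 - t) + 1 = (1 - t)⁻¹ := by field_simp; ring
  rw [negBoseEntropy, hsucc, log_div ht0.ne' h1t, log_inv]
  field_simp
  ring

/-- The convex conjugate of `h(x) = x log x - (x+1) log (x+1)` on `[0, ∞)`
(with `h(0) = 0`) is `h*(y) = -log (1 - e^y)` for `y < 0`. -/
theorem conjugate_of_xlogx_minus :
    ∀ y : ℝ, y < 0 →
      (⨆ x : {x : ℝ // 0 ≤ x},
          ((x : ℝ) * y - ((x : ℝ) * Real.log x - ((x : ℝ) + 1) * Real.log ((x : ℝ) + 1))))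
        = -Real.log (1 - Real.exp y) := by
  intro y hy
  have ht0 : 0 < exp y := exp_pos y
  have ht1 : exp y < 1 := exp_lt_one_iff.mpr hy
  have hbound (x : {x : ℝ // 0 ≤ x}) : (x : ℝ) * y - negBoseEntropy x ≤ -log (1 - exp y) := by
    simpa using mul_log_sub_negBoseEntropy_le ht0 ht1 x.2
  have hmax : -log (1 - exp y) = exp y / (1 - exp y) * y - negBoseEntropy (exp y / (1 - exp y)) := by
    simpa using (mul_log_sub_negBoseEntropy_div_one_sub ht0 ht1).symm
  have hbdd : BddAbove (Set.range fun x : {x : ℝ // 0 ≤ x} => (x : ℝ) * y - negBoseEntropy x) :=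
    ⟨_, Set.forall_mem_range.mpr hbound⟩
  exact le_antisymm (ciSup_le hbound) (le_ciSup_of_le hbdd ⟨_, by positivity⟩ hmax.le)
end

section
/- Consider the iterative scheme θ^{(t+1)} = argmax_θ 𝓛(θ; θ^{(t)}), where 𝓛(θ; θ̃) is an upper bound of ℓ(θ), i.e. 𝓛(θ; θ̃) ≥ ℓ(θ) for all θ, θ̃, with ℓ(θ) = 𝓛(θ; θ). If 𝓛 is jointly continuous and θ^{(t)} → θ̂ as t → ∞, then θ̂ is a global maximizer of ℓ over Θ (i.e., θ̂ is the MLE). -/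
open Filter Topology

/-- MM-algorithm convergence: if `𝓛` is a jointly continuous surrogate with
`ℓ θ ≤ 𝓛 θ θ̃` for all `θ, θ̃` and `ℓ θ = 𝓛 θ θ`, and the iterates
`θ^{(t+1)} ∈ argmax_θ 𝓛(θ; θ^{(t)})` converge to `θ̂`, then `θ̂` is a global
maximizer of `ℓ` (the MLE). -/
theorem mm_limit_is_mle
    {Θ : Type*} [TopologicalSpace Θ]
    (ℓ : Θ → ℝ) (L : Θ → Θ → ℝ)
    (hLcont : Continuous fun p : Θ × Θ => L p.1 p.2)
    (hub : ∀ θ θt : Θ, ℓ θ ≤ L θ θt)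
    (heq : ∀ θ : Θ, ℓ θ = L θ θ)
    (seq : ℕ → Θ)
    (hstep : ∀ t : ℕ, ∀ θ : Θ, L θ (seq t) ≤ L (seq (t + 1)) (seq t))
    (θhat : Θ) (hlim : Tendsto seq atTop (𝓝 θhat)) :
    ∀ θ : Θ, ℓ θ ≤ ℓ θhat := by
  intro θ
  have hlim' : Tendsto (fun t => seq (t + 1)) atTop (𝓝 θhat) :=
    hlim.comp (tendsto_add_atTop_nat 1)
  have h1 : Tendsto (fun t => L θ (seq t)) atTop (𝓝 (L θ θhat)) :=
    (hLcont.comp (Continuous.prodMk_right θ)).continuousAt.tendsto.comp hlim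
  have h2 : Tendsto (fun t => L (seq (t + 1)) (seq t)) atTop (𝓝 (L θhat θhat)) := by
    have : Tendsto (fun t => ((seq (t + 1)), seq t)) atTop (𝓝 (θhat, θhat)) :=
      hlim'.prodMk_nhds hlim
    exact (hLcont.continuousAt.tendsto.comp this)
  have key : L θ θhat ≤ L θhat θhat :=
    le_of_tendsto_of_tendsto' h1 h2 fun t => hstep t θ
  calc ℓ θ ≤ L θ θhat := hub θ θhat
    _ ≤ L θhat θhat := key
    _ = ℓ θhat := (heq θhat).symm
end
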